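/- Let n ≥ 2 and s ≥ 1 be integers and let a = (a_1,…,a_n) be a vector of positive integers with gcd(a_1,…,a_n) = 1. Then the s-covering radius of the simplex S_a with respect to the lattice Λ_a equals μ_s(S_a, Λ_a) = F_s(a) + a_1 + a_2 + … + a_n. -/

import Mathlib

/-!
Write `c = (a₁, …, aₙ₋₁)` and `d = aₙ`. A point `w ∈ Λ_a` satisfies `t ∈ w + r S_a` iff `w ≤ t`
and `⟨c, t - w⟩ ≤ r`. Fix an integer point `u` with `⟨c, u⟩ ≡ b (mod d)`. Then
`z ↦ u - (z₁, …, zₙ₋₁)` sends the representations `⟨a, z⟩ = b` injectively into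
`{w ∈ Λ_a : w ≤ u, ⟨c, u - w⟩ ≤ b}`, and conversely every `w ∈ Λ_a` with `w ≤ u` and `⟨c, u - w⟩ < b + d` comes from a representation of `b`,
since `⟨c, u - w⟩ ≡ b (mod d)`.

Upper bound: for `u = ⌊t⌋` pick `b ∈ (F, F + d]` with `b ≡ ⟨c, u⟩`; its at least `s` representations
give `s` translates of `(F + ∑ a) S_a` containing `t`. Lower bound: by Bézout pick `u` with
`⟨c, u⟩ ≡ F`; if `r < F + ∑ a`, every translate of `r S_a` containing `t = u + (1 - ε)𝟙` comes
from a representation of `F`, and there are fewer than `s` of those.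
-/

open Function

lemma exists_injective_fin_of_le_ncard {α : Type*} {A : Set α} (hA : A.Finite) {s : ℕ}
    (h : s ≤ A.ncard) : ∃ g : Fin s → α, Injective g ∧ ∀ j, g j ∈ A := by
  obtain ⟨B, hBA, hBs⟩ := Set.exists_subset_card_eq h
  have : Finite B := hA.subset hBA
  let e : B ≃ Fin s := Finite.equivFinOfCardEq (by rw [Nat.card_coe_set_eq, hBs])
  exact ⟨fun j => e.symm j, Subtype.val_injective.comp e.symm.injective,
    fun j => hBA (e.symm j).2⟩

lemma le_ncard_of_injective_fin {α : Type*} {A : Set α} (hA : A.Finite) {s : ℕ}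
    {g : Fin s → α} (hg : Injective g) (hgA : ∀ j, g j ∈ A) : s ≤ A.ncard := by
  calc s = (Set.range g).ncard := by rw [Set.ncard_range_of_injective hg, Nat.card_fin]
    _ ≤ A.ncard := Set.ncard_le_ncard (Set.range_subset_iff.2 hgA) hA

lemma Finset.exists_sum_mul_eq_one_of_gcd_eq_one {ι : Type*} (s : Finset ι) {a : ι → ℕ}
    (h : s.gcd a = 1) : ∃ c : ι → ℤ, ∑ i ∈ s, (a i : ℤ) * c i = 1 := by
  obtain ⟨c, hc⟩ := s.gcd_eq_sum_mul fun i => (a i : ℤ)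
  have habs : (s.gcd fun i => (a i : ℤ)).natAbs = 1 :=
    Nat.dvd_one.1 <| h ▸ Finset.dvd_gcd fun i hi => by
      simpa using Int.natAbs_dvd_natAbs.2 (Finset.gcd_dvd (f := fun i => (a i : ℤ)) hi)
  have := Int.natAbs_of_nonneg (Int.finsetGcd_nonneg (s := s) (f := fun i => (a i : ℤ)))
  exact ⟨c, by omega⟩

lemma Int.exists_lt_le_add_dvd_sub {d : ℤ} (hd : 0 < d) (x F : ℤ) :
    ∃ b, F < b ∧ b ≤ F + d ∧ d ∣ x - b := by
  have h := Int.mul_ediv_add_emod (x - F - 1) d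
  have h0 := Int.emod_nonneg (x - F - 1) hd.ne'
  have h1 := Int.emod_lt_of_pos (x - F - 1) hd
  exact ⟨x - d * ((x - F - 1) / d), by omega, by omega, ⟨(x - F - 1) / d, by ring⟩⟩

lemma Int.le_of_dvd_sub_of_lt_add {d D F : ℤ} (hd : 0 < d) (hdvd : d ∣ F - D)
    (hlt : D < F + d) : D ≤ F := by
  obtain ⟨k, hk⟩ := hdvd
  have : 0 ≤ k := by
    by_contra! h
    nlinarith
  nlinarith

lemma exists_nonneg_sum_mul_le_one_eq_add_smul_iff {ι : Type*} [Fintype ι] (c : ι → ℝ)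
    {r : ℝ} (hr : 0 < r) (p t : ι → ℝ) :
    (∃ y : ι → ℝ, (∀ i, 0 ≤ y i) ∧ ∑ i, c i * y i ≤ 1 ∧ t = p + r • y) ↔
      (∀ i, p i ≤ t i) ∧ ∑ i, c i * (t i - p i) ≤ r := by
  constructor
  · rintro ⟨y, hy0, hy1, rfl⟩
    refine ⟨fun i => by simpa using mul_nonneg hr.le (hy0 i), ?_⟩
    calc ∑ i, c i * ((p + r • y) i - p i) = r * ∑ i, c i * y i := by
          rw [Finset.mul_sum]
          refine Finset.sum_congr rfl fun i _ => ?_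
          simp only [Pi.add_apply, Pi.smul_apply, smul_eq_mul]
          ring
      _ ≤ r * 1 := by gcongr
      _ = r := mul_one r
  · rintro ⟨hpt, hsum⟩
    refine ⟨r⁻¹ • (t - p), fun i => ?_, ?_, ?_⟩
    · exact mul_nonneg (inv_nonneg.2 hr.le) (sub_nonneg.2 (hpt i))
    · calc ∑ i, c i * (r⁻¹ • (t - p)) i = r⁻¹ * ∑ i, c i * (t i - p i) := by
            rw [Finset.mul_sum]
            refine Finset.sum_congr rfl fun i _ => ?_
            simp only [Pi.smul_apply, Pi.sub_apply, smul_eq_mul]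
            ring
        _ ≤ r⁻¹ * r := by gcongr
        _ = 1 := inv_mul_cancel₀ hr.ne'
    · rw [smul_smul, mul_inv_cancel₀ hr.ne', one_smul, add_sub_cancel]

def representations {n : ℕ} (a : Fin n → ℕ) (b : ℤ) : Set (Fin n → ℕ) :=
  {z | ∑ i, (a i : ℤ) * z i = b}

section Representations

variable {n : ℕ} {a : Fin n → ℕ}

lemma representations_finite (ha : ∀ i, 0 < a i) (b : ℤ) : (representations a b).Finite := by
  refine (Set.finite_Iic fun _ => b.toNat).subset fun z hz i => show z i ≤ b.toNat from ?_
  have hi : (z i : ℤ) ≤ (a i : ℤ) * z i :=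
    le_mul_of_one_le_left (by positivity) (by exact_mod_cast ha i)
  have hsum : (a i : ℤ) * z i ≤ b :=
    hz ▸ Finset.single_le_sum (f := fun i => (a i : ℤ) * z i) (fun j _ => by positivity)
      (Finset.mem_univ i)
  omega

lemma representations_eq_empty_of_neg {b : ℤ} (hb : b < 0) : representations a b = ∅ :=
  Set.eq_empty_of_forall_notMem fun z hz =>
    hb.not_ge (hz ▸ Finset.sum_nonneg fun i _ => by positivity)

end Representations

section Kannan

variable {m : ℕ} {a : Fin (m + 1) → ℕ} {s : ℕ}

lemma sum_castSucc_mul_of_mem_representations {b : ℤ} {z : Fin (m + 1) → ℕ}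
    (hz : z ∈ representations a b) :
    ∑ i : Fin m, (a i.castSucc : ℤ) * z i.castSucc = b - a (Fin.last m) * z (Fin.last m) := by
  have hz : ∑ i, (a i : ℤ) * z i = b := hz
  rw [Fin.sum_univ_castSucc] at hz
  linarith

lemma eq_of_mem_representations_of_castSucc_eq (ha : 0 < a (Fin.last m)) {b : ℤ}
    {z z' : Fin (m + 1) → ℕ} (hz : z ∈ representations a b) (hz' : z' ∈ representations a b)
    (h : ∀ i : Fin m, z i.castSucc = z' i.castSucc) : z = z' := by
  have hsum := sum_castSucc_mul_of_mem_representations hz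
  rw [Finset.sum_congr rfl fun i _ => by rw [h i], sum_castSucc_mul_of_mem_representations hz']
    at hsum
  have hlast : z (Fin.last m) = z' (Fin.last m) := by
    have hmul : (a (Fin.last m) : ℤ) * z (Fin.last m) = a (Fin.last m) * z' (Fin.last m) := by
      linarith
    exact_mod_cast mul_left_cancel₀ (by exact_mod_cast ha.ne') hmul
  exact funext fun i => Fin.lastCases hlast h i

lemma exists_mem_representations_castSucc_eq (ha : 0 < a (Fin.last m)) {x : Fin m → ℤ}
    (hx : ∀ i, 0 ≤ x i) {b : ℤ} (hle : ∑ i, (a i.castSucc : ℤ) * x i ≤ b)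
    (hdvd : (a (Fin.last m) : ℤ) ∣ b - ∑ i, (a i.castSucc : ℤ) * x i) :
    ∃ z ∈ representations a b, ∀ i, (z i.castSucc : ℤ) = x i := by
  obtain ⟨k, hk⟩ := hdvd
  have hk0 : 0 ≤ k := nonneg_of_mul_nonneg_right (hk ▸ sub_nonneg.2 hle) (by exact_mod_cast ha)
  refine ⟨Fin.snoc (fun i => (x i).toNat) k.toNat, ?_, fun i => by simpa using hx i⟩
  show ∑ i, (a i : ℤ) * _ = b
  simp only [Fin.sum_univ_castSucc, Fin.snoc_castSucc,
    Fin.snoc_last, Int.toNat_of_nonneg hk0, Int.toNat_of_nonneg (hx _)]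
  linarith

def kannanLattice (a : Fin (m + 1) → ℕ) : Set (Fin m → ℤ) :=
  {w | (a (Fin.last m) : ℤ) ∣ ∑ i, (a i.castSucc : ℤ) * w i}

lemma sub_mem_kannanLattice_of_mem_representations {u : Fin m → ℤ} {b : ℤ}
    (hu : (a (Fin.last m) : ℤ) ∣ ∑ i, (a i.castSucc : ℤ) * u i - b) {z : Fin (m + 1) → ℕ}
    (hz : z ∈ representations a b) : (fun i => u i - z i.castSucc) ∈ kannanLattice a := by
  have hsum : ∑ i, (a i.castSucc : ℤ) * (u i - z i.castSucc)
      = (∑ i, (a i.castSucc : ℤ) * u i - b) + a (Fin.last m) * z (Fin.last m) := by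
    simp only [mul_sub, Finset.sum_sub_distrib, sum_castSucc_mul_of_mem_representations hz]
    ring
  show (a (Fin.last m) : ℤ) ∣ _
  rw [hsum]
  exact dvd_add hu (dvd_mul_right _ _)

lemma exists_mem_representations_of_mem_kannanLattice (ha : 0 < a (Fin.last m))
    {u : Fin m → ℤ} {b : ℤ} (hu : (a (Fin.last m) : ℤ) ∣ ∑ i, (a i.castSucc : ℤ) * u i - b)
    {w : Fin m → ℤ} (hw : w ∈ kannanLattice a) (hwu : ∀ i, w i ≤ u i)
    (hlt : ∑ i, (a i.castSucc : ℤ) * (u i - w i) < b + a (Fin.last m)) :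
    ∃ z ∈ representations a b, ∀ i, (z i.castSucc : ℤ) = u i - w i := by
  have hdvd : (a (Fin.last m) : ℤ) ∣ b - ∑ i, (a i.castSucc : ℤ) * (u i - w i) := by
    have hsum : b - ∑ i, (a i.castSucc : ℤ) * (u i - w i)
        = ∑ i, (a i.castSucc : ℤ) * w i - (∑ i, (a i.castSucc : ℤ) * u i - b) := by
      simp only [mul_sub, Finset.sum_sub_distrib]
      ring
    exact hsum ▸ dvd_sub hw hu
  exact exists_mem_representations_castSucc_eq ha (fun i => sub_nonneg.2 (hwu i))
    (Int.le_of_dvd_sub_of_lt_add (by exact_mod_cast ha) hdvd hlt) hdvd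

lemma exists_dvd_sum_mul_sub (hgcd : Finset.univ.gcd a = 1) (b : ℤ) :
    ∃ u : Fin m → ℤ, (a (Fin.last m) : ℤ) ∣ ∑ i, (a i.castSucc : ℤ) * u i - b := by
  obtain ⟨c, hc⟩ := Finset.univ.exists_sum_mul_eq_one_of_gcd_eq_one hgcd
  rw [Fin.sum_univ_castSucc] at hc
  refine ⟨fun i => b * c i.castSucc, -(b * c (Fin.last m)), ?_⟩
  dsimp only
  rw [show ∑ i : Fin m, (a i.castSucc : ℤ) * (b * c i.castSucc)
      = b * ∑ i : Fin m, (a i.castSucc : ℤ) * c i.castSucc by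
    rw [Finset.mul_sum]; exact Finset.sum_congr rfl fun i _ => by ring]
  linear_combination b * hc

variable (a s) in
def IsSFoldCovering (r : ℝ) : Prop :=
  ∀ t : Fin m → ℝ, ∃ b : Fin s → Fin m → ℝ, Injective b ∧ ∀ j,
    (∃ w : Fin m → ℤ, (∀ i, b j i = w i) ∧ w ∈ kannanLattice a) ∧
      ∃ y : Fin m → ℝ, (∀ i, 0 ≤ y i) ∧ ∑ i, (a i.castSucc : ℝ) * y i ≤ 1 ∧ t = b j + r • y

lemma isSFoldCovering_iff {r : ℝ} (hr : 0 < r) :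
    IsSFoldCovering a s r ↔ ∀ t : Fin m → ℝ, ∃ w : Fin s → Fin m → ℤ, Injective w ∧ ∀ j,
      w j ∈ kannanLattice a ∧ (∀ i, (w j i : ℝ) ≤ t i) ∧
        ∑ i, (a i.castSucc : ℝ) * (t i - w j i) ≤ r := by
  simp only [IsSFoldCovering, exists_nonneg_sum_mul_le_one_eq_add_smul_iff _ hr]
  refine forall_congr' fun t => ⟨?_, ?_⟩
  · rintro ⟨b, hb, hbt⟩
    choose w hbw hw using fun j => (hbt j).1
    obtain rfl : b = fun j i => (w j i : ℝ) := funext₂ hbw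
    exact ⟨w, fun j j' h => hb (by simp only [h]), fun j => ⟨hw j, (hbt j).2⟩⟩
  · rintro ⟨w, hw, hwt⟩
    refine ⟨fun j i => (w j i : ℝ), fun j j' h => hw (funext fun i => ?_),
      fun j => ⟨⟨w j, fun i => rfl, (hwt j).1⟩, (hwt j).2⟩⟩
    exact Int.cast_injective (α := ℝ) (congrFun h i)

theorem isSFoldCovering_add_sum (ha : ∀ i, 0 < a i) {F : ℤ}
    (hF : ∀ b, F < b → s ≤ (representations a b).ncard)
    (hpos : 0 < (F : ℝ) + ∑ i, (a i : ℝ)) : IsSFoldCovering a s (F + ∑ i, (a i : ℝ)) := by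
  rw [isSFoldCovering_iff hpos]
  intro t
  have hd : (0 : ℤ) < a (Fin.last m) := by exact_mod_cast ha _
  set u : Fin m → ℤ := fun i => ⌊t i⌋
  obtain ⟨b, hFb, hbF, hu⟩ :=
    Int.exists_lt_le_add_dvd_sub hd (∑ i, (a i.castSucc : ℤ) * u i) F
  obtain ⟨z, hz, hzb⟩ :=
    exists_injective_fin_of_le_ncard (representations_finite ha b) (hF b hFb)
  refine ⟨fun j i => u i - z j i.castSucc, fun j j' h => hz ?_, fun j =>
    ⟨sub_mem_kannanLattice_of_mem_representations hu (hzb j), fun i => ?_, ?_⟩⟩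
  · refine eq_of_mem_representations_of_castSucc_eq (ha _) (hzb j) (hzb j') fun i => ?_
    have := congrFun h i
    simp only [sub_right_inj, Nat.cast_inj] at this
    exact this
  · push_cast
    linarith [Int.floor_le (t i), (z j i.castSucc).cast_nonneg (α := ℝ)]
  · have hfrac : ∀ i, t i - u i ≤ 1 := fun i => by linarith [Int.lt_floor_add_one (t i)]
    have hsum : ∑ i : Fin m, (a i.castSucc : ℤ) * z j i.castSucc ≤ F + a (Fin.last m) := by
      rw [sum_castSucc_mul_of_mem_representations (hzb j)]
      linarith [mul_nonneg hd.le (z j (Fin.last m)).cast_nonneg]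
    calc ∑ i, (a i.castSucc : ℝ) * (t i - ((u i - z j i.castSucc : ℤ) : ℝ))
        = ∑ i, (a i.castSucc : ℝ) * (t i - u i)
          + ((∑ i : Fin m, (a i.castSucc : ℤ) * z j i.castSucc : ℤ) : ℝ) := by
          push_cast
          rw [← Finset.sum_add_distrib]
          exact Finset.sum_congr rfl fun i _ => by ring
      _ ≤ ∑ i : Fin m, (a i.castSucc : ℝ) * 1 + ((F + a (Fin.last m) : ℤ) : ℝ) := by
          gcongr with i
          exact hfrac i
      _ = F + ∑ i, (a i : ℝ) := by
          simp only [mul_one, Fin.sum_univ_castSucc, Int.cast_add, Int.cast_natCast]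
          ring

theorem add_sum_le_of_isSFoldCovering (ha : ∀ i, 0 < a i) (hgcd : Finset.univ.gcd a = 1)
    {F : ℤ} (hF : (representations a F).ncard < s) {r : ℝ} (hr : 0 < r)
    (hcov : IsSFoldCovering a s r) : (F : ℝ) + ∑ i, (a i : ℝ) ≤ r := by
  rw [isSFoldCovering_iff hr] at hcov
  by_contra! hlt
  obtain ⟨u, hu⟩ := exists_dvd_sum_mul_sub hgcd F
  set A : ℝ := ∑ i : Fin m, (a i.castSucc : ℝ)
  have hsplit : ∑ i, (a i : ℝ) = A + a (Fin.last m) := Fin.sum_univ_castSucc _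
  have hA : 0 ≤ A := by positivity
  set ε := ((F : ℝ) + ∑ i, (a i : ℝ) - r) / (A + 1)
  have hε : 0 < ε := div_pos (by linarith) (by linarith)
  have hεA : ε * A < F + ∑ i, (a i : ℝ) - r := by
    calc ε * A < ε * (A + 1) := by linarith
      _ = F + ∑ i, (a i : ℝ) - r := div_mul_cancel₀ _ (by linarith)
  obtain ⟨w, hw, hwt⟩ := hcov fun i => u i + 1 - ε
  have hrep : ∀ j, ∃ z ∈ representations a F, ∀ i, (z i.castSucc : ℤ) = u i - w j i := by
    intro j
    obtain ⟨hwΛ, hwle, hsum⟩ := hwt j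
    have hwu : ∀ i, w j i ≤ u i := fun i => by
      have : (w j i : ℝ) < u i + 1 := by linarith [hwle i]
      exact Int.lt_add_one_iff.1 (by exact_mod_cast this)
    refine exists_mem_representations_of_mem_kannanLattice (ha _) hu hwΛ hwu ?_
    have hcast : ((∑ i, (a i.castSucc : ℤ) * (u i - w j i) : ℤ) : ℝ)
        = ∑ i, (a i.castSucc : ℝ) * ((u i + 1 - ε) - w j i) - (1 - ε) * A := by
      push_cast
      rw [Finset.mul_sum, ← Finset.sum_sub_distrib]
      exact Finset.sum_congr rfl fun i _ => by ring
    have : ((∑ i, (a i.castSucc : ℤ) * (u i - w j i) : ℤ) : ℝ)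
        < ((F + a (Fin.last m) : ℤ) : ℝ) := by
      rw [hcast]
      push_cast
      linarith
    exact_mod_cast this
  choose z hzF hzw using hrep
  refine hF.not_ge
    (le_ncard_of_injective_fin (representations_finite ha F) (fun j j' h => hw ?_) hzF)
  funext i
  have := hzw j i
  rw [h, hzw j' i] at this
  linarith

end Kannan

/-- **The s-covering radius of Kannan's simplex equals the s-Frobenius number shifted**
(Theorem 2 in Aliev–Fukshansky–Henk, generalizing Kannan's theorem). Let `a` be a
primitive vector of positive integers, `F` its `s`-Frobenius number,
`S_a = {x ∈ ℝ^{n-1} : x ≥ 0, ∑ aᵢ xᵢ ≤ 1}` and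
`Λ_a = {w ∈ ℤ^{n-1} : aₙ ∣ ∑ aᵢ wᵢ}` (viewed inside `ℝ^{n-1}`). If `μ` is the
`s`-covering radius of `S_a` with respect to `Λ_a`, i.e. the least `μ > 0` such that
every `t ∈ ℝ^{n-1}` lies in at least `s` distinct lattice translates of `μ S_a`, then
`μ = F + a₁ + ⋯ + aₙ`. -/
theorem sCoveringRadius_simplex_eq_sFrobenius_add {n s : ℕ} (hn : 2 ≤ n)
    (a : Fin n → ℕ) (ha : ∀ i, 0 < a i) (hgcd : Finset.univ.gcd a = 1)
    (F : ℤ)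
    (hF : IsGreatest
      {b : ℤ | {z : Fin n → ℕ | ∑ i, (a i : ℤ) * (z i : ℤ) = b}.ncard < s} F)
    (μ : ℝ)
    (hμ : IsLeast {r : ℝ | 0 < r ∧ ∀ t : Fin (n - 1) → ℝ,
        ∃ b : Fin s → (Fin (n - 1) → ℝ), Function.Injective b ∧
          ∀ j, (∃ w : Fin (n - 1) → ℤ, (∀ i, b j i = (w i : ℝ)) ∧
                  (a ⟨n - 1, by omega⟩ : ℤ) ∣
                    (∑ i, (a (Fin.castLE (n.sub_le 1) i) : ℤ) * w i)) ∧
            ∃ y : Fin (n - 1) → ℝ, (∀ i, 0 ≤ y i) ∧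
              (∑ i, (a (Fin.castLE (n.sub_le 1) i) : ℝ) * y i) ≤ 1 ∧
              t = b j + r • y} μ) :
    μ = (F : ℝ) + ∑ i, (a i : ℝ) := by
  obtain ⟨m, rfl⟩ : ∃ m, n = m + 1 := ⟨n - 1, by omega⟩
  have hFs : (representations a F).ncard < s := hF.1
  have hgt : ∀ b, F < b → s ≤ (representations a b).ncard :=
    fun b hb => not_lt.1 fun h => hb.not_ge (hF.2 h)
  have hF_ge : (-1 : ℝ) ≤ F := by
    suffices (representations a (-1)).ncard < s from by exact_mod_cast hF.2 this
    rw [representations_eq_empty_of_neg (by norm_num), Set.ncard_empty]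
    exact (Nat.zero_le _).trans_lt hFs
  have hsum_ge : (2 : ℝ) ≤ ∑ i, (a i : ℝ) := by
    calc (2 : ℝ) ≤ m + 1 := by exact_mod_cast hn
      _ = ∑ _i : Fin (m + 1), (1 : ℝ) := by simp
      _ ≤ ∑ i, (a i : ℝ) := Finset.sum_le_sum fun i _ => by exact_mod_cast ha i
  have hpos : 0 < (F : ℝ) + ∑ i, (a i : ℝ) := by linarith
  exact le_antisymm (hμ.2 ⟨hpos, isSFoldCovering_add_sum ha hgt hpos⟩)
    (add_sum_le_of_isSFoldCovering ha hgcd hFs hμ.1.1 hμ.1.2)
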